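/- Let A be a finite-dimensional evolution algebra with natural basis B. Then there exist natural bases B' of rad(A) and B̄ of A/rad(A) such that Γ(rad(A), B') and Γ(A/rad(A), B̄) are full subgraphs of Γ(A,B) (on the acyclic vertices and on the remaining vertices, respectively). -/

import Mathlib

open Submodule

section EvolutionPreamble

/-- The set of `k`-th generation descendants of a vertex in a directed graph
given by an edge relation `E`; `Dk E 0 i = {i}`. -/
def Dk {V : Type*} (E : V → V → Prop) : ℕ → V → Set V
  | 0, i => {i}
  | n + 1, i => {k | ∃ j ∈ Dk E n i, E j k}

/-- A vertex is cyclic if there is a (possibly trivial) path from it to a vertex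
lying on a cycle. -/
def IsCyclicVertex {V : Type*} (E : V → V → Prop) (i : V) : Prop :=
  ∃ j, Relation.ReflTransGen E i j ∧ Relation.TransGen E j j

/-- Connectedness of a directed graph: every nontrivial partition of the
vertex set is crossed by an edge (in one direction or the other). -/
def GraphConnected {V : Type*} (E : V → V → Prop) : Prop :=
  ∀ s : Set V, s.Nonempty → sᶜ.Nonempty → ∃ x ∈ s, ∃ y ∈ sᶜ, E x y ∨ E y x

variable {K : Type*} [Field K] {A : Type*} [NonUnitalNonAssocRing A]
  [Module K A] [SMulCommClass K A A] [IsScalarTower K A A] {ι : Type*}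

/-- A basis is natural if distinct basis vectors multiply to zero. -/
def IsNaturalBasis (B : Module.Basis ι K A) : Prop := ∀ i j, i ≠ j → B i * B j = 0

/-- Edge relation of the directed graph `Γ(A,B)` associated to an evolution
algebra `A` with natural basis `B`: `(i,k)` is an edge iff the structure
constant `w_{ik}` is nonzero. -/
def edge (B : Module.Basis ι K A) (i k : ι) : Prop := B.repr (B i * B i) k ≠ 0

/-- First-generation descendants in `Γ(A,B)`. -/
def D1 (B : Module.Basis ι K A) (i : ι) : Set ι := {k | edge B i k}

/-- The increasing chain of index sets `λ_k(B)`: `λ_0 = ∅`,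
`λ_{k+1}(B) = {i : D¹(i) ⊆ λ_k(B)}`.  In particular
`λ_1(B) = {i : e_i² = 0}`. -/
def lam (B : Module.Basis ι K A) : ℕ → Set ι
  | 0 => ∅
  | n + 1 => {i | ∀ k, edge B i k → k ∈ lam B n}

/-- `I` is a (two-sided) ideal. -/
def IsIdeal (I : Submodule K A) : Prop := ∀ x ∈ I, ∀ a : A, x * a ∈ I ∧ a * x ∈ I

/-- The absorption property: `xA ⊆ I` implies `x ∈ I`. -/
def HasAbsorption (I : Submodule K A) : Prop := ∀ x : A, (∀ a : A, x * a ∈ I) → x ∈ I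

/-- The absorption radical: intersection of all ideals with the absorption property. -/
def rad (K : Type*) (A : Type*) [Field K] [NonUnitalNonAssocRing A]
    [Module K A] [SMulCommClass K A A] [IsScalarTower K A A] : Submodule K A :=
  sInf {I : Submodule K A | IsIdeal I ∧ HasAbsorption I}

lemma rad_isIdeal : IsIdeal (rad K A) := by
  intro x hx a
  rw [rad, Submodule.mem_sInf] at hx
  constructor <;>
    · rw [rad, Submodule.mem_sInf]
      intro I hI
      first
        | exact (hI.1 x (hx I hI) a).1
        | exact (hI.1 x (hx I hI) a).2

/-- The annihilator `ann(A) = {x : xA = Ax = 0}` as a submodule. -/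
def annSub (K : Type*) (A : Type*) [Field K] [NonUnitalNonAssocRing A]
    [Module K A] [SMulCommClass K A A] [IsScalarTower K A A] : Submodule K A where
  carrier := {x | ∀ a : A, x * a = 0 ∧ a * x = 0}
  add_mem' := by
    intro x y hx hy a
    constructor
    · rw [add_mul, (hx a).1, (hy a).1, add_zero]
    · rw [mul_add, (hx a).2, (hy a).2, add_zero]
  zero_mem' := by intro a; simp
  smul_mem' := by
    intro c x hx a
    constructor
    · rw [smul_mul_assoc, (hx a).1, smul_zero]
    · rw [mul_smul_comm, (hx a).2, smul_zero]

/-- The upper annihilating series: `ann⁰(A) = 0`,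
`annⁱ⁺¹(A) = {x : xA ∪ Ax ⊆ annⁱ(A)}`. -/
def annSeries (K : Type*) (A : Type*) [Field K] [NonUnitalNonAssocRing A]
    [Module K A] [SMulCommClass K A A] [IsScalarTower K A A] : ℕ → Submodule K A
  | 0 => ⊥
  | n + 1 =>
    { carrier := {x | ∀ a : A, x * a ∈ annSeries K A n ∧ a * x ∈ annSeries K A n}
      add_mem' := by
        intro x y hx hy a
        constructor
        · rw [add_mul]; exact add_mem (hx a).1 (hy a).1
        · rw [mul_add]; exact add_mem (hx a).2 (hy a).2
      zero_mem' := by intro a; simp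
      smul_mem' := by
        intro c x hx a
        constructor
        · rw [smul_mul_assoc]; exact smul_mem _ c (hx a).1
        · rw [mul_smul_comm]; exact smul_mem _ c (hx a).2 }

/-- The annihilator stabilizing index `asi(A)`. -/
noncomputable def asi (K : Type*) (A : Type*) [Field K] [NonUnitalNonAssocRing A]
    [Module K A] [SMulCommClass K A A] [IsScalarTower K A A] : ℕ :=
  sInf {q : ℕ | annSeries K A q = annSeries K A (q + 1)}

/-- Product of two submodules (span of pairwise products). -/
def smulSub (I J : Submodule K A) : Submodule K A :=
  Submodule.span K (Set.image2 (· * ·) (I : Set A) (J : Set A))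

/-- Powers of a subalgebra/ideal, with `N^{k} = Σ_{i+j=k, i,j ≥ 1} Nⁱ Nʲ`. -/
def npow (I : Submodule K A) : ℕ → Submodule K A
  | 0 => ⊥
  | 1 => I
  | n + 2 => ⨆ i : Fin (n + 1), smulSub (npow I (i.1 + 1)) (npow I (n + 1 - i.1))
  termination_by n => n
  decreasing_by
  · have := i.isLt; omega
  · have := i.isLt; omega

/-- `I` is an ideal of the subalgebra `N`. -/
def IsIdealIn (N I : Submodule K A) : Prop :=
  I ≤ N ∧ ∀ x ∈ I, ∀ a ∈ N, x * a ∈ I ∧ a * x ∈ I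

/-- The (sub)algebra `N` is decomposable: it is the direct sum of two nonzero
ideals of `N`. -/
def DecomposableIn (N : Submodule K A) : Prop :=
  ∃ I J : Submodule K A, IsIdealIn N I ∧ IsIdealIn N J ∧ I ≠ ⊥ ∧ J ≠ ⊥ ∧
    I ⊓ J = ⊥ ∧ I ⊔ J = N

/-- Multiplication inside an ideal `N` (an ideal is closed under products). -/
def subMul {N : Submodule K A} (hN : IsIdeal N) (x y : N) : N :=
  ⟨(x : A) * (y : A), (hN x x.2 y).1⟩

/-- The induced multiplication on the quotient `A ⧸ I` by an ideal `I`. -/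
def quotMul (I : Submodule K A) (hI : IsIdeal I) (x y : A ⧸ I) : A ⧸ I :=
  Quotient.liftOn₂ x y (fun a b => Submodule.Quotient.mk (a * b)) (by
    intro a b a' b' ha hb
    have ha' : a - a' ∈ I := (Submodule.quotientRel_def I).mp ha
    have hb' : b - b' ∈ I := (Submodule.quotientRel_def I).mp hb
    refine (Submodule.Quotient.eq I).mpr ?_
    have h : a * b - a' * b' = a * (b - b') + (a - a') * b' := by
      rw [mul_sub, sub_mul]; abel
    rw [h]
    exact add_mem (hI _ hb' a).2 (hI _ ha' b').1)

/-- Edge relation of the graph associated to the quotient evolution algebra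
`A ⧸ I` relative to a basis `C`. -/
def edgeQ {κ : Type*} (I : Submodule K A) (hI : IsIdeal I)
    (C : Module.Basis κ K (A ⧸ I)) (i k : κ) : Prop :=
  C.repr (quotMul I hI (C i) (C i)) k ≠ 0

end EvolutionPreamble

/-!
For a natural basis the product is `a * b = ∑ᵢ aᵢ bᵢ eᵢ²`, so the algebra is commutative and
`x * A ⊆ span {e_k | k ∈ t}` holds exactly when every vertex in the support of `x` has all its
children in `t`. By induction this gives `annⁿ(A) = span {eᵢ | i ∈ λₙ(B)}`. Every `annⁿ(A)` lies
in each absorbing ideal, while once the series stabilises (at `asi`, by finite dimension) its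
last term is itself an absorbing ideal, by commutativity; hence `rad(A) = span {eᵢ | i ∈ λ_asi(B)}`.
The basis vectors then restrict to a basis of `rad(A)` and project to a basis of `A ⧸ rad(A)` with
unchanged coordinates, so both structure matrices are submatrices of that of `B`.
-/

open Module

namespace Module.Basis

variable {R M ι : Type*} [Ring R] [AddCommGroup M] [Module R M] (B : Basis ι R M)
  {s : Set ι} {N : Submodule R M} (h : N = span R (B '' s))

noncomputable def ofEqSpanImage : Basis s R N :=
  (Basis.span (B.linearIndependent.comp ((↑) : s → ι) Subtype.val_injective)).map
    (LinearEquiv.ofEq _ _ (by rw [h, Set.range_comp, Subtype.range_coe]))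

@[simp]
lemma coe_ofEqSpanImage_apply (i : s) : (B.ofEqSpanImage h i : M) = B i := by
  simp [ofEqSpanImage]

lemma ofEqSpanImage_repr_apply (x : N) (k : s) : (B.ofEqSpanImage h).repr x k = B.repr x k := by
  suffices (B.ofEqSpanImage h).coord k = B.coord k ∘ₗ N.subtype from LinearMap.congr_fun this x
  refine (B.ofEqSpanImage h).ext fun j => ?_
  simp [Finsupp.single_apply_left Subtype.val_injective]

noncomputable def quotientOfEqSpanImage : Basis {i // i ∉ s} R (M ⧸ N) :=
  (B.ofEqSpanImage (s := sᶜ) rfl).map (N.quotientEquivOfIsCompl _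
    (h ▸ B.linearIndependent.isCompl_span_image B.span_eq isCompl_compl)).symm

@[simp]
lemma quotientOfEqSpanImage_apply (i : {i // i ∉ s}) :
    B.quotientOfEqSpanImage h i = Submodule.Quotient.mk (B i) := by
  simp only [quotientOfEqSpanImage, map_apply, quotientEquivOfIsCompl_symm_apply]
  exact congrArg _ (B.coe_ofEqSpanImage_apply _ i)

lemma quotientOfEqSpanImage_repr_mk (a : M) (k : {i // i ∉ s}) :
    (B.quotientOfEqSpanImage h).repr (Submodule.Quotient.mk a) k = B.repr a k := by
  suffices (B.quotientOfEqSpanImage h).coord k ∘ₗ N.mkQ = B.coord k from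
    LinearMap.congr_fun this a
  refine B.ext fun j => ?_
  by_cases hj : j ∈ s
  · have hmk : (Submodule.Quotient.mk (B j) : M ⧸ N) = 0 :=
      (Submodule.Quotient.mk_eq_zero N).mpr (h ▸ subset_span ⟨j, hj, rfl⟩)
    have hk : j ≠ k := fun hjk => k.2 (hjk ▸ hj)
    simp [hmk, Finsupp.single_eq_of_ne' hk]
  · rw [LinearMap.comp_apply, Submodule.mkQ_apply, ← quotientOfEqSpanImage_apply B h ⟨j, hj⟩,
      coord_apply, coord_apply, repr_self, repr_self]
    exact (Finsupp.single_apply_left Subtype.val_injective _ _ _).symm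

end Module.Basis

section EvolutionAlgebra

variable {K : Type*} [Field K] {A : Type*} [NonUnitalNonAssocRing A] [Module K A] {ι : Type*}

lemma quotMul_mk (I : Submodule K A) (hI : IsIdeal I) (a b : A) :
    quotMul I hI (Submodule.Quotient.mk a) (Submodule.Quotient.mk b) =
      Submodule.Quotient.mk (a * b) :=
  rfl

lemma mul_self_mem_span_image_iff (B : Basis ι K A) (i : ι) (t : Set ι) :
    B i * B i ∈ span K (B '' t) ↔ ∀ k, edge B i k → k ∈ t := by
  simp [B.mem_span_image, Set.subset_def, edge]

variable [SMulCommClass K A A] [IsScalarTower K A A]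

lemma mem_annSeries_succ {n : ℕ} {x : A} :
    x ∈ annSeries K A (n + 1) ↔ ∀ a : A, x * a ∈ annSeries K A n ∧ a * x ∈ annSeries K A n :=
  Iff.rfl

lemma annSeries_le_succ (n : ℕ) : annSeries K A n ≤ annSeries K A (n + 1) := by
  induction n with
  | zero => exact bot_le
  | succ n ih => exact fun x hx a => ⟨ih (hx a).1, ih (hx a).2⟩

lemma annSeries_asi_eq_succ [IsNoetherian K A] :
    annSeries K A (asi K A) = annSeries K A (asi K A + 1) := by
  obtain ⟨m, hm⟩ := WellFoundedGT.monotone_chain_condition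
    ⟨annSeries K A, monotone_nat_of_le_succ annSeries_le_succ⟩
  exact Nat.sInf_mem (s := {q | annSeries K A q = annSeries K A (q + 1)}) ⟨m, hm _ m.le_succ⟩

lemma hasAbsorption_rad : HasAbsorption (rad K A) := fun x hx =>
  mem_sInf.mpr fun I hI => hI.2 x fun a => mem_sInf.mp (hx a) I hI

lemma annSeries_le_rad (n : ℕ) : annSeries K A n ≤ rad K A := by
  induction n with
  | zero => exact bot_le
  | succ n ih => exact fun x hx => hasAbsorption_rad x fun a => ih (hx a).1

lemma rad_le_annSeries (hcomm : ∀ a b : A, a * b = b * a) {m : ℕ}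
    (hm : annSeries K A m = annSeries K A (m + 1)) : rad K A ≤ annSeries K A m := by
  refine sInf_le ⟨fun x hx a => ?_, fun x hx => ?_⟩
  · rw [hm] at hx
    exact hx a
  · rw [hm]
    exact fun a => ⟨hx a, hcomm a x ▸ hx a⟩

lemma rad_eq_annSeries_asi [IsNoetherian K A] (hcomm : ∀ a b : A, a * b = b * a) :
    rad K A = annSeries K A (asi K A) :=
  le_antisymm (rad_le_annSeries hcomm annSeries_asi_eq_succ) (annSeries_le_rad _)

namespace IsNaturalBasis

variable {B : Basis ι K A} (hB : IsNaturalBasis B)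
include hB

protected lemma mul_comm (a b : A) : a * b = b * a := by
  have : LinearMap.mul K A = (LinearMap.mul K A).flip :=
    B.ext fun i => B.ext fun j => by
      rcases eq_or_ne i j with rfl | hij
      · rfl
      · simp [hB i j hij, hB j i hij.symm]
  exact LinearMap.congr_fun₂ this a b

lemma mul_basis (a : A) (j : ι) : a * B j = B.repr a j • (B j * B j) := by
  have : (LinearMap.mul K A).flip (B j) = (B.coord j).smulRight (B j * B j) :=
    B.ext fun i => by
      rcases eq_or_ne i j with rfl | hij
      · simp
      · simp [hB i j hij, Finsupp.single_eq_of_ne' hij]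
  exact LinearMap.congr_fun this a

lemma forall_mul_mem_span_image_iff (x : A) (t : Set ι) :
    (∀ a, x * a ∈ span K (B '' t)) ↔ x ∈ span K (B '' {i | ∀ k, edge B i k → k ∈ t}) := by
  constructor
  · intro hx
    refine B.mem_span_image.mpr fun j hj => ?_
    have hxj := hx (B j)
    rw [hB.mul_basis, smul_mem_iff _ (Finsupp.mem_support_iff.mp hj)] at hxj
    exact (mul_self_mem_span_image_iff B j t).mp hxj
  · intro hx a
    induction hx using Submodule.span_induction with
    | mem y hy =>
      obtain ⟨i, hi, rfl⟩ := hy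
      rw [hB.mul_comm, hB.mul_basis]
      exact smul_mem _ _ ((mul_self_mem_span_image_iff B i t).mpr hi)
    | zero => simp
    | add y z _ _ hy hz => rw [add_mul]; exact add_mem hy hz
    | smul c y _ hy => rw [smul_mul_assoc]; exact smul_mem _ c hy

lemma annSeries_eq_span_lam (n : ℕ) : annSeries K A n = span K (B '' lam B n) := by
  induction n with
  | zero => simp [annSeries, lam]
  | succ n ih =>
    ext x
    refine mem_annSeries_succ.trans (Iff.trans ?_ (hB.forall_mul_mem_span_image_iff x _))
    rw [← ih]
    exact forall_congr' fun a => and_iff_left_of_imp fun hxa => hB.mul_comm x a ▸ hxa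

lemma rad_eq_span_lam [Finite ι] : rad K A = span K (B '' lam B (asi K A)) := by
  have : Module.Finite K A := .of_basis B
  rw [rad_eq_annSeries_asi hB.mul_comm, hB.annSeries_eq_span_lam]

end IsNaturalBasis

end EvolutionAlgebra

/-- There are natural bases of `rad(A)` and `A ⧸ rad(A)` whose associated
graphs are full subgraphs of `Γ(A,B)` (on the acyclic vertices `λ_m(B)` and on
the remaining vertices, respectively). -/
theorem stmt19 {K : Type*} [Field K] {A : Type*} [NonUnitalNonAssocRing A]
    [Module K A] [SMulCommClass K A A] [IsScalarTower K A A]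
    {ι : Type*} [Fintype ι] (B : Module.Basis ι K A) (hB : IsNaturalBasis B) :
    ∃ (B' : Module.Basis (lam B (asi K A)) K (rad K A))
      (Bb : Module.Basis {i : ι // i ∉ lam B (asi K A)} K (A ⧸ rad K A)),
      -- both are natural bases
      (∀ i j, i ≠ j → subMul rad_isIdeal (B' i) (B' j) = 0) ∧
      (∀ i j, i ≠ j → quotMul (rad K A) rad_isIdeal (Bb i) (Bb j) = 0) ∧
      -- Γ(rad A, B') is the full subgraph of Γ(A,B) on λ_m(B)
      (∀ i k, (B'.repr (subMul rad_isIdeal (B' i) (B' i)) k ≠ 0 ↔ edge B i.1 k.1)) ∧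
      -- Γ(A/rad A, Bb) is the full subgraph of Γ(A,B) on the complement
      (∀ i k, (edgeQ (rad K A) rad_isIdeal Bb i k ↔ edge B i.1 k.1)) := by
  have hrad := hB.rad_eq_span_lam
  refine ⟨B.ofEqSpanImage hrad, B.quotientOfEqSpanImage hrad, fun i j hij => ?_,
    fun i j hij => ?_, fun i k => ?_, fun i k => ?_⟩
  · ext
    simp [subMul, hB i j (Subtype.val_injective.ne hij)]
  · simp [quotMul_mk, hB i j (Subtype.val_injective.ne hij)]
  · simp [Basis.ofEqSpanImage_repr_apply, subMul, edge]
  · simp [edgeQ, quotMul_mk, Basis.quotientOfEqSpanImage_repr_mk, edge]
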